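/- arXiv:1703.00718 — 3 statements merged into one kernel-verified Lean document; each statement's English description precedes it below -/
import Mathlib

section
/- Let K/F be a finite Galois field extension, σ ∈ Gal(K/F) of order n with Fix(σ) = F, and suppose σ commutes with every τ ∈ Gal(K/F). Let f(t) = t^m − Σ_{i=0}^{m−1} a_i t^i ∈ K[t;σ] be not invariant with a_{m−1} ∈ F^×, and let n ≥ m−1. If for every τ ∈ Gal(K/F) with τ ≠ id there exists some index i ≠ m−1 with a_i ≠ 0 and τ(a_i) ≠ a_i, then Aut_F(S_f) = {id}. If instead all coefficients of f lie in F (f ∈ F[t;σ]), then every automorphism of S_f equals H_{τ,1} for some τ ∈ Gal(K/F), and Aut_F(S_f) ≅ Gal(K/F). -/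
/-! ## The Petit algebra `S_f = K[t;σ]/K[t;σ]f`

For a twisted polynomial ring `R = K[t;σ]` (multiplication determined by `t·a = σ(a)·t`)
and the monic skew polynomial `f(t) = t^m - Σ_{i<m} a_i t^i` (encoded by its coefficient
vector `a : Fin m → K`), the Petit algebra `S_f` is realised on coefficient vectors
`Fin m → K` (the polynomials of degree `< m`), with multiplication `g ∘ h = (gh) mod_r f`. -/

/-- The remainder of `t^s` after right division by `f(t) = t^m - Σ_{i<m} a_i t^i`:
for `s < m` it is `t^s` itself, and for `s ≥ m` one uses
`t^s ≡ Σ_i σ^{s-m}(a_i) t^{s-m+i} (mod R·f)`. -/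
noncomputable def tred {K : Type*} [Field K] (σ : K → K) (m : ℕ) (a : Fin m → K) (s : ℕ) :
    Fin m → K :=
  if _h : s < m then (fun i => if (i : ℕ) = s then (1 : K) else 0)
  else ∑ i : Fin m, σ^[s - m] (a i) • tred σ m a (s - m + (i : ℕ))
termination_by s
decreasing_by
  have hi := i.isLt
  omega

/-- The multiplication `g ∘ h = (gh) mod_r f` of the Petit algebra `S_f`. -/
noncomputable def pmul {K : Type*} [Field K] (σ : K → K) {m : ℕ} (a : Fin m → K)
    (x y : Fin m → K) : Fin m → K :=
  ∑ i : Fin m, ∑ j : Fin m, (x i * σ^[(i : ℕ)] (y j)) • tred σ m a ((i : ℕ) + (j : ℕ))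

/-- The unit element `1` of `S_f`. -/
noncomputable def pone (K : Type*) [Field K] (m : ℕ) : Fin m → K :=
  fun i => if (i : ℕ) = 0 then 1 else 0

/-- The element `t` of `S_f`. -/
noncomputable def tvec (K : Type*) [Field K] (m : ℕ) : Fin m → K :=
  fun i => if (i : ℕ) = 1 then 1 else 0

/-- The canonical copy of `c ∈ K` inside `S_f`. -/
noncomputable def iota (K : Type*) [Field K] (m : ℕ) (c : K) : Fin m → K :=
  fun i => if (i : ℕ) = 0 then c else 0

/-- `S_f` is associative; by Petit's theorem this holds if and only if `f` is
invariant (i.e. `R·f` is a two-sided ideal of `R = K[t;σ]`). -/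
def PAssoc {K : Type*} [Field K] (σ : K → K) {m : ℕ} (a : Fin m → K) : Prop :=
  ∀ x y z : Fin m → K, pmul σ a (pmul σ a x y) z = pmul σ a x (pmul σ a y z)

/-- `H` is an automorphism of the algebra `S_f` over `F = Fix(σ)`: an `F`-linear
bijection preserving the multiplication and the unit. -/
structure IsPetitAut {K : Type*} [Field K] (σ : K → K) {m : ℕ} (a : Fin m → K)
    (H : (Fin m → K) → (Fin m → K)) : Prop where
  bijective : Function.Bijective H
  map_add : ∀ x y, H (x + y) = H x + H y
  map_smul : ∀ c : K, σ c = c → ∀ x, H (c • x) = c • H x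
  map_mul : ∀ x y, H (pmul σ a x y) = pmul σ a (H x) (H y)
  map_one : H (pone K m) = pone K m

/-- `H` is an inner automorphism `x ↦ (c_l ∘ x) ∘ c` of `S_f`, where `c_l` is a
left inverse of `c`. -/
def IsInnerPetit {K : Type*} [Field K] (σ : K → K) {m : ℕ} (a : Fin m → K)
    (H : (Fin m → K) → (Fin m → K)) : Prop :=
  ∃ c cl : Fin m → K, pmul σ a cl c = pone K m ∧
    ∀ x, H x = pmul σ a (pmul σ a cl x) c

/-- The map `H_{τ,k} : Σ x_i t^i ↦ τ(x_0) + Σ_{i≥1} τ(x_i)·(Π_{l<i} σ^l(k))·t^i`. -/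
noncomputable def Hmap {K : Type*} [Field K] (σ τ : K → K) {m : ℕ} (k : K)
    (x : Fin m → K) : Fin m → K :=
  fun i => τ (x i) * ∏ l ∈ Finset.range (i : ℕ), σ^[l] k

/-!
Since `S_f` is not associative, its left nucleus is `K`: if a left nuclear `x` had a nonzero
coefficient at `t^d` with `d ≥ 1` maximal, then `(x ∘ t^(m-d)) ∘ z = x ∘ (t^(m-d) ∘ z)` would force
`a ∘ z = t^m z mod_r f` for all `z`, and this single identity already makes `S_f` associative.
So an automorphism `H` restricts to some `τ ∈ Gal(K/F)` on `K`. Applying `H` to `t c = σ(c) t`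
gives `H(t) = k t`, since a term `t^i` with `i ≠ 1` would give `σ^i = σ`, impossible for
`σ ≠ id` and `i ≤ m - 1 ≤ ord σ`; hence `H = H_{τ,k}`. Comparing the coefficients of `t^(m-1)` in
`H(a) = H(t ∘ t^(m-1))`, where `a_(m-1) ∈ F^×`, yields `k = 1`, and then `H(a) = a` says that `τ`
fixes every `a_i`. Conversely, `H_{τ,1}` is an automorphism whenever `τ` commutes with `σ` and
fixes the `a_i`.
-/

open Finset

section Reduction

variable {K : Type*} [Field K] (σ : K → K) {m : ℕ} (a : Fin m → K)

lemma tred_of_lt {s : ℕ} (h : s < m) :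
    tred σ m a s = fun i : Fin m => if (i : ℕ) = s then (1 : K) else 0 := by
  rw [tred]; exact dif_pos h

lemma tred_of_le {s : ℕ} (h : m ≤ s) :
    tred σ m a s = ∑ i : Fin m, σ^[s - m] (a i) • tred σ m a (s - m + i) := by
  rw [tred]; exact dif_neg (by omega)

lemma tred_val (i : Fin m) : tred σ m a i = Pi.single i 1 := by
  ext j
  simp [tred_of_lt σ a i.isLt, Pi.single_apply, Fin.val_inj]

lemma sum_smul_tred (x : Fin m → K) : ∑ i : Fin m, x i • tred σ m a i = x := by
  simp_rw [tred_val, ← Pi.single_smul', smul_eq_mul, mul_one]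
  exact Finset.univ_sum_single x

lemma tred_self : tred σ m a m = a := by
  rw [tred_of_le σ a le_rfl]
  simpa using sum_smul_tred σ a a

lemma tred_zero (hm : 0 < m) : tred σ m a 0 = pone K m := by
  ext i; simp [tred_of_lt σ a hm, pone]

lemma tred_one (hm : 1 < m) : tred σ m a 1 = tvec K m := by
  ext i; simp [tred_of_lt σ a hm, tvec]

end Reduction

section Multiplication

variable {K S : Type*} [Field K] [FunLike S K K] [RingHomClass S K K] (σ : S) {m : ℕ}
  (a : Fin m → K)

/-- The remainder of `t^u · z` on right division by `f`. -/
noncomputable def tpowMul (u : ℕ) : (Fin m → K) →+ (Fin m → K) :=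
  AddMonoidHom.mk' (fun z => ∑ l : Fin m, (⇑σ)^[u] (z l) • tred σ m a (u + l)) fun z w => by
    simp only [Pi.add_apply, iterate_map_add, add_smul, sum_add_distrib]

lemma tpowMul_apply (u : ℕ) (z : Fin m → K) :
    tpowMul σ a u z = ∑ l : Fin m, (⇑σ)^[u] (z l) • tred σ m a (u + l) := rfl

lemma tpowMul_smul (u : ℕ) (c : K) (z : Fin m → K) :
    tpowMul σ a u (c • z) = (⇑σ)^[u] c • tpowMul σ a u z := by
  simp only [tpowMul_apply, smul_sum, smul_smul, Pi.smul_apply, smul_eq_mul, iterate_map_mul]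

lemma tpowMul_zero (z : Fin m → K) : tpowMul σ a 0 z = z := by
  simpa [tpowMul_apply] using sum_smul_tred σ a z

lemma tpowMul_tred (u v : ℕ) : tpowMul σ a u (tred σ m a v) = tred σ m a (u + v) := by
  induction v using Nat.strong_induction_on with
  | _ v ih =>
  by_cases hv : v < m
  · have hfin : tred σ m a v = Pi.single ⟨v, hv⟩ 1 := tred_val σ a ⟨v, hv⟩
    rw [hfin, tpowMul_apply, sum_eq_single ⟨v, hv⟩ (fun j _ hj => by simp [hj])
      (by simp)]
    simp [iterate_map_one]
  · rw [tred_of_le σ a (not_lt.mp hv), tred_of_le σ a (by omega), map_sum]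
    refine sum_congr rfl fun p _ => ?_
    rw [tpowMul_smul, ih _ (by omega), ← Function.iterate_add_apply,
      show u + (v - m) = u + v - m by omega, show u + (v - m + p) = u + v - m + p by omega]

lemma tpowMul_tpowMul (u v : ℕ) (z : Fin m → K) :
    tpowMul σ a u (tpowMul σ a v z) = tpowMul σ a (u + v) z := by
  rw [tpowMul_apply σ a v, map_sum]
  refine sum_congr rfl fun l _ => ?_
  rw [tpowMul_smul, tpowMul_tred, ← Function.iterate_add_apply, add_assoc]

lemma pmul_eq_sum (x y : Fin m → K) : pmul σ a x y = ∑ i : Fin m, x i • tpowMul σ a i y := by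
  simp only [pmul, tpowMul_apply, smul_sum, smul_smul]

lemma pmul_smul_left (c : K) (x y : Fin m → K) :
    pmul σ a (c • x) y = c • pmul σ a x y := by
  simp only [pmul_eq_sum, smul_sum, Pi.smul_apply, smul_smul, smul_eq_mul]

lemma pmul_sum_left {ι : Type*} (s : Finset ι) (x : ι → Fin m → K) (y : Fin m → K) :
    pmul σ a (∑ j ∈ s, x j) y = ∑ j ∈ s, pmul σ a (x j) y := by
  simp only [pmul_eq_sum, Finset.sum_apply, sum_smul]
  exact sum_comm

lemma pmul_tred_of_lt {s : ℕ} (hs : s < m) (z : Fin m → K) :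
    pmul σ a (tred σ m a s) z = tpowMul σ a s z := by
  have hfin : tred σ m a s = Pi.single ⟨s, hs⟩ 1 := tred_val σ a ⟨s, hs⟩
  rw [pmul_eq_sum, hfin, sum_eq_single ⟨s, hs⟩ (fun j _ hj => by simp [hj]) (by simp)]
  simp

lemma tpowMul_pmul (u : ℕ) (y z : Fin m → K) :
    tpowMul σ a u (pmul σ a y z) = ∑ j : Fin m, (⇑σ)^[u] (y j) • tpowMul σ a (u + j) z := by
  simp only [pmul_eq_sum, map_sum, tpowMul_smul, tpowMul_tpowMul]

lemma pmul_tpowMul_sub (u : ℕ) (y z : Fin m → K) :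
    pmul σ a (tpowMul σ a u y) z - tpowMul σ a u (pmul σ a y z)
      = ∑ j : Fin m, (⇑σ)^[u] (y j) •
          (pmul σ a (tred σ m a (u + j)) z - tpowMul σ a (u + j) z) := by
  simp only [tpowMul_apply σ a u y, pmul_sum_left, pmul_smul_left, tpowMul_pmul, smul_sub,
    sum_sub_distrib]

lemma pmul_pmul_sub (x y z : Fin m → K) :
    pmul σ a (pmul σ a x y) z - pmul σ a x (pmul σ a y z)
      = ∑ i : Fin m, x i • (pmul σ a (tpowMul σ a i y) z - tpowMul σ a i (pmul σ a y z)) := by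
  simp only [pmul_eq_sum σ a x, pmul_sum_left, pmul_smul_left, smul_sub, sum_sub_distrib]

lemma pmul_tred_of_pmul_self (h : ∀ z, pmul σ a a z = tpowMul σ a m z) (s : ℕ)
    (z : Fin m → K) : pmul σ a (tred σ m a s) z = tpowMul σ a s z := by
  induction s using Nat.strong_induction_on generalizing z with
  | _ s ih =>
  by_cases hs : s < m
  · exact pmul_tred_of_lt σ a hs z
  · have hms : s - m + m = s := Nat.sub_add_cancel (not_lt.mp hs)
    have hred := tpowMul_tred σ a (s - m) m
    rw [tred_self, hms] at hred
    have hdefect := pmul_tpowMul_sub σ a (s - m) a z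
    rw [sum_eq_zero fun j _ => by rw [ih _ (by omega), sub_self, smul_zero], sub_eq_zero]
      at hdefect
    rw [← hred, hdefect, h, tpowMul_tpowMul, hms]

lemma passoc_of_pmul_self (h : ∀ z, pmul σ a a z = tpowMul σ a m z) : PAssoc σ a := by
  intro x y z
  rw [← sub_eq_zero, pmul_pmul_sub]
  refine sum_eq_zero fun i _ => ?_
  rw [pmul_tpowMul_sub, sum_eq_zero fun j _ => by
    rw [pmul_tred_of_pmul_self σ a h, sub_self, smul_zero], smul_zero]

def leftNucleus : Set (Fin m → K) :=
  {x | ∀ y z, pmul σ a (pmul σ a x y) z = pmul σ a x (pmul σ a y z)}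

lemma iota_add (c d : K) : iota K m (c + d) = iota K m c + iota K m d := by
  ext i; by_cases h : (i : ℕ) = 0 <;> simp [iota, h]

lemma iota_injective (hm : 0 < m) : Function.Injective (iota K m) := fun c d h => by
  simpa [iota] using congrFun h ⟨0, hm⟩

lemma iota_eq_smul_pone (c : K) : iota K m c = c • pone K m := by
  ext i; by_cases h : (i : ℕ) = 0 <;> simp [iota, pone, h]

lemma pmul_iota_left (hm : 0 < m) (c : K) (y : Fin m → K) :
    pmul σ a (iota K m c) y = c • y := by
  rw [pmul_eq_sum, sum_eq_single ⟨0, hm⟩ (fun i _ hi => by simp [iota, Fin.ext_iff.not.mp hi])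
    (by simp)]
  simp [iota, tpowMul_zero]

lemma pmul_iota_right (x : Fin m → K) (c : K) :
    pmul σ a x (iota K m c) = fun i => x i * (⇑σ)^[i] c := by
  conv_rhs => rw [← sum_smul_tred σ a (fun i => x i * (⇑σ)^[i] c)]
  rw [pmul_eq_sum]
  refine sum_congr rfl fun i _ => ?_
  rw [tpowMul_apply, sum_eq_single ⟨0, i.pos⟩
    (fun j _ hj => by simp [iota, Fin.ext_iff.not.mp hj, iterate_map_zero]) (by simp)]
  simp [iota, smul_smul]

lemma pmul_iota_iota (hm : 0 < m) (c d : K) :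
    pmul σ a (iota K m c) (iota K m d) = iota K m (c * d) := by
  rw [pmul_iota_left σ a hm, iota_eq_smul_pone, iota_eq_smul_pone, smul_smul]

lemma iota_mem_leftNucleus (hm : 0 < m) (c : K) : iota K m c ∈ leftNucleus σ a := fun y z => by
  rw [pmul_iota_left σ a hm, pmul_iota_left σ a hm, pmul_smul_left]

lemma eq_iota_of_mem_leftNucleus (hm : 0 < m) (hna : ¬ PAssoc σ a) {x : Fin m → K}
    (hx : x ∈ leftNucleus σ a) : x = iota K m (x ⟨0, hm⟩) := by
  classical
  by_contra hne
  obtain ⟨i₀, hi₀, hxi₀⟩ : ∃ i : Fin m, (i : ℕ) ≠ 0 ∧ x i ≠ 0 := by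
    by_contra! h
    refine hne (funext fun i => ?_)
    by_cases hi : (i : ℕ) = 0
    · simp [iota, show i = ⟨0, hm⟩ from Fin.ext hi]
    · simp [iota, hi, h i hi]
  obtain ⟨d, hd, hdmax⟩ := (univ.filter fun i => x i ≠ 0).exists_max_image (fun i => (i : ℕ))
    ⟨i₀, by simpa using hxi₀⟩
  simp only [mem_filter, mem_univ, true_and] at hd hdmax
  have hd₁ : 1 ≤ (d : ℕ) := by have := hdmax i₀ hxi₀; omega
  -- Multiplying by `t^(m-d)` moves the leading term `x_d t^d` of `x` exactly onto `t^m`.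
  refine hna (passoc_of_pmul_self σ a fun z => ?_)
  set D : ℕ → Fin m → K := fun s => pmul σ a (tred σ m a s) z - tpowMul σ a s z
  have hshift : ∀ i : Fin m,
      pmul σ a (tpowMul σ a i (tred σ m a (m - d))) z
        - tpowMul σ a i (pmul σ a (tred σ m a (m - d)) z) = D (i + (m - d)) := fun i => by
    rw [tpowMul_tred, pmul_tred_of_lt σ a (s := m - d) (by omega), tpowMul_tpowMul]
  have h0 := sub_eq_zero.mpr (hx (tred σ m a (m - d)) z)
  rw [pmul_pmul_sub, sum_congr rfl fun i _ => by rw [hshift i],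
    sum_eq_single d (fun i _ hid => ?_) (by simp)] at h0
  · rw [Nat.add_sub_cancel' d.isLt.le] at h0
    simpa [D, tred_self, sub_eq_zero, hd] using h0
  · by_cases hxi : x i = 0
    · rw [hxi, zero_smul]
    · have hlt : (i : ℕ) < d := lt_of_le_of_ne (hdmax i hxi) (Fin.val_ne_of_ne hid)
      simp [D, pmul_tred_of_lt σ a (show (i : ℕ) + (m - d) < m by omega)]

lemma Hmap_one (τ : K → K) : Hmap σ τ (1 : K) = fun x : Fin m → K => τ ∘ x := by
  ext x i
  simp [Hmap, iterate_map_one]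

end Multiplication

section Conjugation

variable {K T : Type*} [Field K] [FunLike T K K] [RingHomClass T K K] (σ : K → K) (τ : T)
  {m : ℕ} (a : Fin m → K)

lemma comp_tred (hτ : Function.Commute τ σ) (s : ℕ) :
    ⇑τ ∘ tred σ m a s = tred σ m (⇑τ ∘ a) s := by
  induction s using Nat.strong_induction_on with
  | _ s ih =>
  by_cases hs : s < m
  · ext i
    simp only [Function.comp_apply, tred_of_lt σ _ hs]
    split_ifs <;> simp
  · ext i
    simp only [Function.comp_apply, tred_of_le σ _ (not_lt.mp hs), Finset.sum_apply, map_sum,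
      Pi.smul_apply, smul_eq_mul, map_mul, (hτ.iterate_right _).eq]
    refine sum_congr rfl fun p _ => ?_
    rw [← ih _ (by omega), Function.comp_apply]

lemma comp_pmul (hτ : Function.Commute τ σ) (x y : Fin m → K) :
    ⇑τ ∘ pmul σ a x y = pmul σ (⇑τ ∘ a) (⇑τ ∘ x) (⇑τ ∘ y) := by
  ext n
  simp only [pmul, Function.comp_apply, Finset.sum_apply, map_sum, Pi.smul_apply, smul_eq_mul,
    map_mul, (hτ.iterate_right _).eq, ← comp_tred σ τ a hτ]

end Conjugation

lemma eq_one_of_pow_eq_self {G : Type*} [Group G] {g : G} (hg : g ≠ 1) {i : ℕ}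
    (hi : i ≤ orderOf g) (h : g ^ i = g) : i = 1 := by
  rcases i with _ | _ | j
  · exact absurd (h.symm.trans (pow_zero g)) hg
  · rfl
  · rw [pow_succ] at h
    have hpow : g ^ (j + 1) = 1 := mul_right_cancel (h.trans (one_mul g).symm)
    have := Nat.le_of_dvd j.succ_pos (orderOf_dvd_of_pow_eq_one hpow)
    omega

section Automorphisms

variable {F K : Type*} [Field F] [Field K] [Algebra F K] {σ : K ≃ₐ[F] K} {m : ℕ}
  {a : Fin m → K} {H : (Fin m → K) → Fin m → K}

namespace IsPetitAut

def toAddMonoidHom (hH : IsPetitAut σ a H) : (Fin m → K) →+ (Fin m → K) :=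
  AddMonoidHom.mk' H hH.map_add

lemma map_zero (hH : IsPetitAut σ a H) : H 0 = 0 := hH.toAddMonoidHom.map_zero

lemma map_sum (hH : IsPetitAut σ a H) {ι : Type*} (s : Finset ι) (x : ι → Fin m → K) :
    H (∑ i ∈ s, x i) = ∑ i ∈ s, H (x i) :=
  _root_.map_sum hH.toAddMonoidHom x s

lemma mem_leftNucleus_iff (hH : IsPetitAut σ a H) {x : Fin m → K} :
    H x ∈ leftNucleus σ a ↔ x ∈ leftNucleus σ a := by
  constructor
  · intro hx y z
    apply hH.bijective.1
    simp only [hH.map_mul, hx _ _]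
  · intro hx y z
    obtain ⟨y, rfl⟩ := hH.bijective.2 y
    obtain ⟨z, rfl⟩ := hH.bijective.2 z
    simp only [← hH.map_mul, hx y z]

lemma exists_map_iota (hH : IsPetitAut σ a H) (hm : 0 < m) (hna : ¬ PAssoc σ a) :
    ∃ τ : K ≃ₐ[F] K, ∀ c, H (iota K m c) = iota K m (τ c) := by
  have hnuc : ∀ {x}, x ∈ leftNucleus σ a → x = iota K m (x ⟨0, hm⟩) :=
    eq_iota_of_mem_leftNucleus σ a hm hna
  choose τ hτ using fun c => (⟨_, hnuc (hH.mem_leftNucleus_iff.2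
    (iota_mem_leftNucleus σ a hm c))⟩ : ∃ d, H (iota K m c) = iota K m d)
  have inj := iota_injective (K := K) hm
  let τA : K →ₐ[F] K :=
    { toFun := τ
      map_one' := inj <| by rw [← hτ, iota_eq_smul_pone, one_smul, hH.map_one]
      map_mul' := fun c d => inj <| by
        rw [← hτ, ← pmul_iota_iota σ a hm, ← pmul_iota_iota σ a hm, hH.map_mul, hτ, hτ]
      map_zero' := inj <| by
        rw [← hτ, show iota K m (0 : K) = 0 by simp [iota_eq_smul_pone]]
        exact hH.map_zero
      map_add' := fun c d => inj <| by rw [← hτ, iota_add, hH.map_add, hτ, hτ, iota_add]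
      commutes' := fun r => inj <| by
        rw [← hτ, iota_eq_smul_pone, hH.map_smul _ (σ.commutes r), hH.map_one] }
  have surj : Function.Surjective τA := fun d => by
    obtain ⟨x, hx⟩ := hH.bijective.2 (iota K m d)
    have hxnuc := hnuc (hH.mem_leftNucleus_iff.1 (hx ▸ iota_mem_leftNucleus σ a hm d))
    exact ⟨x ⟨0, hm⟩, inj (by rw [← hx, hxnuc, hτ]; rfl)⟩
  exact ⟨AlgEquiv.ofBijective τA ⟨(τA : K →+* K).injective, surj⟩, hτ⟩

lemma map_smul_of_map_iota (hH : IsPetitAut σ a H) (hm : 0 < m) {τ : K → K}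
    (hτ : ∀ c, H (iota K m c) = iota K m (τ c)) (c : K) (x : Fin m → K) :
    H (c • x) = τ c • H x := by
  rw [← pmul_iota_left σ a hm, hH.map_mul, hτ, pmul_iota_left σ a hm]

lemma exists_map_tvec (hH : IsPetitAut σ a H) (hm : 2 ≤ m) (hσ : σ ≠ 1)
    (hord : m - 1 ≤ orderOf σ) {τ : K ≃ₐ[F] K} (hcomm : Function.Commute σ τ)
    (hτ : ∀ c, H (iota K m c) = iota K m (τ c)) :
    ∃ k : K, k ≠ 0 ∧ H (tvec K m) = k • tvec K m := by
  have hm0 : 0 < m := by omega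
  have htc : ∀ c, pmul σ a (tvec K m) (iota K m c) = pmul σ a (iota K m (σ c)) (tvec K m) :=
    fun c => by
      rw [pmul_iota_right, pmul_iota_left σ a hm0]
      ext i; by_cases h : (i : ℕ) = 1 <;> simp [tvec, h]
  -- Applying `H` to `t c = σ(c) t` shows that `σ^i = σ` wherever `H t` has a nonzero coefficient.
  have hsupp : ∀ i : Fin m, H (tvec K m) i ≠ 0 → (i : ℕ) = 1 := fun i hi => by
    refine eq_one_of_pow_eq_self hσ (by omega) (AlgEquiv.ext fun d => ?_)
    obtain ⟨c, rfl⟩ := τ.surjective d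
    have h := congrArg H (htc c)
    rw [hH.map_mul, hH.map_mul, hτ, hτ, pmul_iota_right, pmul_iota_left σ a hm0,
      ← hcomm c] at h
    have hi' := congrFun h i
    simp only [Pi.smul_apply, smul_eq_mul] at hi'
    simpa using mul_left_cancel₀ hi (hi'.trans (mul_comm _ _))
  have hk : H (tvec K m) = H (tvec K m) ⟨1, by omega⟩ • tvec K m := by
    ext i
    by_cases h : (i : ℕ) = 1
    · simp [tvec, show i = ⟨1, by omega⟩ from Fin.ext h]
    · simpa [tvec, h] using mt (hsupp i) h
  refine ⟨_, fun hk0 => ?_, hk⟩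
  rw [hk0, zero_smul, ← hH.map_zero] at hk
  simpa [tvec] using congrFun (hH.bijective.1 hk) ⟨1, by omega⟩

lemma map_tred (hH : IsPetitAut σ a H) (hm : 1 < m) {k : K}
    (hk : H (tvec K m) = k • tvec K m) (n : ℕ) (hn : n ≤ m) :
    H (tred σ m a n) = (∏ l ∈ range n, (⇑σ)^[l] k) • tred σ m a n := by
  induction n with
  | zero => rw [tred_zero σ a (by omega), hH.map_one, prod_range_zero, one_smul]
  | succ n ih =>
    have htn : tred σ m a (n + 1) = pmul σ a (tred σ m a 1) (tred σ m a n) := by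
      rw [pmul_tred_of_lt σ a hm, tpowMul_tred, add_comm]
    conv_lhs => rw [htn]
    rw [hH.map_mul, tred_one σ a hm, hk, ← tred_one σ a hm, ih (by omega), pmul_smul_left,
      pmul_tred_of_lt σ a hm, tpowMul_smul, tpowMul_tred, smul_smul, add_comm 1,
      prod_range_succ', Function.iterate_one, map_prod, Function.iterate_zero_apply, mul_comm]
    simp only [← Function.iterate_succ_apply' (⇑σ)]

lemma eq_Hmap (hH : IsPetitAut σ a H) (hm : 1 < m) {τ : K → K}
    (hτ : ∀ c, H (iota K m c) = iota K m (τ c)) {k : K} (hk : H (tvec K m) = k • tvec K m) :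
    H = Hmap σ τ k := by
  ext x : 1
  conv_lhs => rw [← sum_smul_tred σ a x]
  rw [hH.map_sum]
  refine (sum_congr rfl fun i _ => ?_).trans (sum_smul_tred σ a (Hmap σ τ k x))
  rw [hH.map_smul_of_map_iota (by omega) hτ, hH.map_tred hm hk i i.isLt.le, smul_smul]
  rfl

theorem exists_eq_Hmap_one (hH : IsPetitAut σ a H) (hm : 2 ≤ m) (hσ : σ ≠ 1)
    (hcomm : ∀ τ : K ≃ₐ[F] K, Function.Commute σ τ) (hna : ¬ PAssoc σ a)
    (ha1 : a ⟨m - 1, Nat.sub_lt (by omega) one_pos⟩ ∈ Set.range (algebraMap F K))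
    (ha2 : a ⟨m - 1, Nat.sub_lt (by omega) one_pos⟩ ≠ 0) (hord : m - 1 ≤ orderOf σ) :
    ∃ τ : K ≃ₐ[F] K, H = Hmap σ τ 1 ∧ ∀ i, τ (a i) = a i := by
  obtain ⟨τ, hτ⟩ := hH.exists_map_iota (by omega) hna
  obtain ⟨k, hk0, hk⟩ := hH.exists_map_tvec hm hσ hord (hcomm τ) hτ
  have hHk := hH.eq_Hmap (by omega) hτ hk
  have hHa := hH.map_tred (by omega) hk m le_rfl
  rw [tred_self] at hHa
  -- the coefficient of `t^(m-1)` in `H a`: `τ` fixes `a_(m-1) ∈ F^×`, so `σ^(m-1) k = 1`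
  have hk1 : k = 1 := by
    obtain ⟨r, hr⟩ := ha1
    have h := congrFun hHa ⟨m - 1, by omega⟩
    rw [hHk] at h
    simp only [Hmap, Pi.smul_apply, smul_eq_mul, ← hr, AlgEquiv.commutes] at h
    rw [← Nat.sub_add_cancel (show 1 ≤ m by omega), prod_range_succ, Nat.add_sub_cancel] at h
    have hP : ∏ l ∈ range (m - 1), (⇑σ)^[l] k ≠ 0 :=
      prod_ne_zero_iff.2 fun l _ => by simpa [← AlgEquiv.coe_pow] using hk0
    have hσk : (⇑σ)^[m - 1] k = (⇑σ)^[m - 1] 1 := by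
      rw [iterate_map_one]
      refine mul_right_cancel₀ (hr ▸ ha2) (mul_left_cancel₀ hP ?_)
      linear_combination -h
    exact (σ.injective.iterate _) hσk
  subst hk1
  refine ⟨τ, hHk, fun i => ?_⟩
  simpa [hHk, Hmap_one] using congrFun hHa i

end IsPetitAut

theorem isPetitAut_Hmap_one (hfix : ∀ c, σ c = c → c ∈ Set.range (algebraMap F K))
    (τ : K ≃ₐ[F] K) (hcomm : Function.Commute σ τ) (hτa : ∀ i, τ (a i) = a i) :
    IsPetitAut σ a (Hmap σ τ 1) := by
  rw [Hmap_one]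
  refine ⟨⟨τ.injective.comp_left, τ.surjective.comp_left⟩, fun x y => ?_, fun c hc x => ?_,
    fun x y => ?_, ?_⟩
  · ext i; simp
  · obtain ⟨r, rfl⟩ := hfix c hc
    ext i; simp [Algebra.smul_def]
  · rw [comp_pmul σ τ a hcomm.symm, show ⇑τ ∘ a = a from funext hτa]
  · ext i; by_cases h : (i : ℕ) = 0 <;> simp [pone, h]

end Automorphisms

/-- **Theorem 3.4.** Let `K/F` be finite Galois, `σ ∈ Gal(K/F)` of order `n ≥ m − 1`
with `Fix(σ) = F`, commuting with every `τ ∈ Gal(K/F)`; let `f = t^m − Σ a_i t^i` be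
not invariant (equivalently `S_f` not associative) with `a_{m−1} ∈ F^×`.
(1) If for every `τ ≠ id` there is an index `i ≠ m−1` with `a_i ≠ 0` and
`τ(a_i) ≠ a_i`, then `Aut_F(S_f) = {id}`.
(2) If all coefficients of `f` lie in `F`, then the automorphisms of `S_f` are exactly
the maps `H_{τ,1}`, `τ ∈ Gal(K/F)`, and `Aut_F(S_f) ≅ Gal(K/F)`. -/
theorem stmt10 {F K : Type*} [Field F] [Field K] [Algebra F K]
    (σ : K ≃ₐ[F] K) (hσ : σ ≠ AlgEquiv.refl)
    (hfix : ∀ x : K, σ x = x ↔ x ∈ Set.range (algebraMap F K))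
    (hcomm : ∀ (τ : K ≃ₐ[F] K) (x : K), σ (τ x) = τ (σ x))
    (m : ℕ) (hm : 2 ≤ m) (a : Fin m → K)
    (hna : ¬ PAssoc (⇑σ) a)
    (ha1 : a ⟨m - 1, by omega⟩ ∈ Set.range (algebraMap F K))
    (ha2 : a ⟨m - 1, by omega⟩ ≠ 0)
    (hord : m - 1 ≤ orderOf σ) :
    ((∀ τ : K ≃ₐ[F] K, τ ≠ AlgEquiv.refl →
        ∃ i : Fin m, (i : ℕ) ≠ m - 1 ∧ a i ≠ 0 ∧ τ (a i) ≠ a i) →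
      ∀ H : (Fin m → K) → (Fin m → K), IsPetitAut (⇑σ) a H ↔ H = id)
    ∧ ((∀ i : Fin m, a i ∈ Set.range (algebraMap F K)) →
      (∀ H : (Fin m → K) → (Fin m → K),
        IsPetitAut (⇑σ) a H ↔ ∃ τ : K ≃ₐ[F] K, H = Hmap (⇑σ) (⇑τ) (1 : K))
      ∧ (∀ τ ρ : K ≃ₐ[F] K,
          (Hmap (⇑σ) (⇑τ) (1 : K) : (Fin m → K) → Fin m → K) ∘ Hmap (⇑σ) (⇑ρ) (1 : K)
            = Hmap (⇑σ) (⇑(τ * ρ)) (1 : K))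
      ∧ Function.Injective
          (fun τ : K ≃ₐ[F] K => (Hmap (⇑σ) (⇑τ) (1 : K) : (Fin m → K) → Fin m → K))) := by
  have hfix' (c : K) (hc : σ c = c) : c ∈ Set.range (algebraMap F K) := (hfix c).1 hc
  have hstruct {H} (hH : IsPetitAut σ a H) :=
    hH.exists_eq_Hmap_one hm hσ (fun τ x => hcomm τ x) hna ha1 ha2 hord
  have hrefl : Hmap σ (AlgEquiv.refl : K ≃ₐ[F] K) (1 : K) = (id : (Fin m → K) → _) := by
    rw [Hmap_one]; rfl
  refine ⟨fun htriv H => ⟨fun hH => ?_, ?_⟩,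
    fun hF => ⟨fun H => ⟨fun hH => ?_, ?_⟩, fun τ ρ => ?_, fun τ ρ h => ?_⟩⟩
  · obtain ⟨τ, rfl, hτa⟩ := hstruct hH
    obtain rfl : τ = AlgEquiv.refl := by
      by_contra hτ
      obtain ⟨i, -, -, hi⟩ := htriv τ hτ
      exact hi (hτa i)
    exact hrefl
  · rintro rfl
    exact hrefl ▸ isPetitAut_Hmap_one hfix' _ (fun x => hcomm _ x) fun _ => rfl
  · obtain ⟨τ, rfl, -⟩ := hstruct hH
    exact ⟨τ, rfl⟩
  · rintro ⟨τ, rfl⟩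
    refine isPetitAut_Hmap_one hfix' τ (fun x => hcomm τ x) fun i => ?_
    obtain ⟨r, hr⟩ := hF i
    rw [← hr, AlgEquiv.commutes]
  · simp only [Hmap_one]
    rfl
  · simp only [Hmap_one] at h
    ext c
    simpa [iota] using congrFun (congrFun h (iota K m c)) ⟨0, by omega⟩
end

section
/- Let K/F be a finite Galois field extension, σ ∈ Gal(K/F) with Fix(σ) = F, and suppose F contains an s-th root of unity ω. Suppose either f(t) = t^s − a ∈ K[t;σ] with a ∈ K∖F, or f(t) = t^{sl} − Σ_{i=0}^{l−1} a_{is} t^{is} ∈ K[t;σ] with S_f not associative. Then the maps H_{id,ω^j} for 0 ≤ j ≤ s−1 are F-algebra automorphisms of S_f, and ⟨H_{id,ω}⟩ is a cyclic subgroup of Aut_F(S_f) of order at most s; if ω is a primitive s-th root of unity, its order is exactly s. -/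
/-! For `k ∈ F`, `H_{id,k}` is the diagonal scaling `t^i ↦ k^i t^i`. When `k^s = 1` it is
multiplicative on `S_f` because `f` only has monomials of degree divisible by `s` and `s ∣ deg f`,
so the remainder of `t^u` on right division by `f` only involves powers `t^n` with `n ≡ u (mod s)`.
The powers of `H_{id,ω}` are the maps `H_{id,ω^j}`, and reading off the coefficient of `t` shows
that `H_{id,ω^j} = id` forces `ω^j = 1`. -/

section PetitAut

variable {K : Type*} [Field K]

theorem Hmap_id_eq_of_apply_eq (σ : K → K) {m : ℕ} {k : K} (hk : σ k = k) :
    (Hmap σ id k : (Fin m → K) → Fin m → K) = fun (x : Fin m → K) i => x i * k ^ (i : ℕ) := by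
  funext x i
  simp only [Hmap, id_eq, Function.iterate_fixed hk, Finset.prod_const, Finset.card_range]

theorem Hmap_id_one {G : Type*} [FunLike G K K] [RingHomClass G K K] (σ : G) {m : ℕ} :
    (Hmap σ id 1 : (Fin m → K) → Fin m → K) = id := by
  rw [Hmap_id_eq_of_apply_eq σ (map_one σ)]
  simp only [one_pow, mul_one]
  rfl

theorem Hmap_id_comp {G : Type*} [FunLike G K K] [RingHomClass G K K] (σ : G) {m : ℕ}
    {k k' : K} (hk : σ k = k) (hk' : σ k' = k') :
    (Hmap σ id k : (Fin m → K) → Fin m → K) ∘ Hmap σ id k' = Hmap σ id (k * k') := by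
  rw [Hmap_id_eq_of_apply_eq σ hk, Hmap_id_eq_of_apply_eq σ hk',
    Hmap_id_eq_of_apply_eq σ (by rw [map_mul, hk, hk'])]
  funext x i
  simp only [Function.comp_apply, mul_pow]
  ring

theorem Hmap_id_iterate {G : Type*} [FunLike G K K] [RingHomClass G K K] (σ : G) {m : ℕ}
    {k : K} (hk : σ k = k) (p : ℕ) :
    (Hmap σ id k : (Fin m → K) → Fin m → K)^[p] = Hmap σ id (k ^ p) := by
  induction p with
  | zero => rw [pow_zero, Hmap_id_one, Function.iterate_zero]
  | succ p ih =>
    rw [Function.iterate_succ', ih, Hmap_id_comp σ hk (by rw [map_pow, hk]), pow_succ']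

theorem eq_one_of_Hmap_id_eq_id (σ : K → K) {m : ℕ} (hm : 1 < m) {k : K}
    (h : (Hmap σ id k : (Fin m → K) → Fin m → K) = id) : k = 1 := by
  simpa [Hmap] using congrFun (congrFun h fun _ => 1) ⟨1, hm⟩

theorem tred_modEq_of_ne_zero {σ : K → K} (hσ : σ 0 = 0) {m s : ℕ} {a : Fin m → K}
    (hm : s ∣ m) (ha : ∀ i : Fin m, a i ≠ 0 → s ∣ (i : ℕ)) (u : ℕ) (n : Fin m)
    (h : tred σ m a u n ≠ 0) : u ≡ n [MOD s] := by
  induction u using Nat.strong_induction_on generalizing n with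
  | _ u ih =>
    rw [tred] at h
    split_ifs at h with hu
    · simp only [ne_eq, ite_eq_right_iff, one_ne_zero, imp_false, not_not] at h
      rw [h]
    · rw [Finset.sum_apply] at h
      obtain ⟨i, -, hi⟩ := Finset.exists_ne_zero_of_sum_ne_zero h
      obtain ⟨hai, hrec⟩ := mul_ne_zero_iff.mp hi
      have hsi : s ∣ (i : ℕ) := ha i fun h0 => hai (by rw [h0, Function.iterate_fixed hσ])
      have hmi : m ≡ i [MOD s] :=
        (Nat.modEq_zero_iff_dvd.mpr hm).trans (Nat.modEq_zero_iff_dvd.mpr hsi).symm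
      calc u = u - m + m := by omega
        _ ≡ u - m + i [MOD s] := hmi.add_left _
        _ ≡ n [MOD s] := ih _ (by omega) n hrec

theorem Hmap_id_pmul {G : Type*} [FunLike G K K] [RingHomClass G K K] {σ : G} {k : K}
    (hk : σ k = k) {s m : ℕ} (hks : k ^ s = 1) {a : Fin m → K} (hm : s ∣ m)
    (ha : ∀ i : Fin m, a i ≠ 0 → s ∣ (i : ℕ)) (x y : Fin m → K) :
    Hmap σ id k (pmul σ a x y) = pmul σ a (Hmap σ id k x) (Hmap σ id k y) := by
  rw [Hmap_id_eq_of_apply_eq σ hk]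
  funext n
  simp only [pmul, Finset.sum_apply, Pi.smul_apply, smul_eq_mul, Finset.sum_mul]
  refine Finset.sum_congr rfl fun i _ => Finset.sum_congr rfl fun j _ => ?_
  have hcomm : Function.Commute (· * k ^ (j : ℕ)) σ := fun z => by
    simp only [map_mul, map_pow, hk]
  rw [← (hcomm.iterate_right i) (y j)]
  by_cases ht : tred σ m a (i + j) n = 0
  · simp only [ht, mul_zero, zero_mul]
  · rw [pow_eq_pow_of_modEq (tred_modEq_of_ne_zero (map_zero σ) hm ha _ n ht).symm hks, pow_add]
    ring

theorem isPetitAut_Hmap_id {G : Type*} [FunLike G K K] [RingHomClass G K K] {σ : G} {k : K}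
    (hk : σ k = k) {s m : ℕ} (hs : 0 < s) (hks : k ^ s = 1) {a : Fin m → K} (hm : s ∣ m)
    (ha : ∀ i : Fin m, a i ≠ 0 → s ∣ (i : ℕ)) :
    IsPetitAut σ a (Hmap σ id k) where
  bijective := by
    have hk0 : k ≠ 0 := by rintro rfl; simp [zero_pow hs.ne'] at hks
    rw [Hmap_id_eq_of_apply_eq σ hk]
    refine Function.bijective_iff_has_inverse.mpr ⟨fun x i => x i * (k ^ (i : ℕ))⁻¹, ?_, ?_⟩ <;>
      intro x <;> funext i <;> field_simp
  map_add x y := funext fun i => add_mul (x i) (y i) _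
  map_smul c _ x := funext fun i => mul_assoc c (x i) _
  map_mul := Hmap_id_pmul hk hks hm ha
  map_one := by
    rw [Hmap_id_eq_of_apply_eq σ hk]
    funext i
    by_cases hi : (i : ℕ) = 0 <;> simp [pone, hi]

end PetitAut

theorem stmt14_general {F K : Type*} [Field F] [Field K] [Algebra F K]
    (σ : K ≃ₐ[F] K)
    (s : ℕ) (hs : 0 < s) (ω : F) (hω : ω ^ s = 1)
    (m : ℕ) (a : Fin m → K)
    (hcase :
      (m = s ∧ ∃ aa : K, aa ∉ Set.range (algebraMap F K) ∧
        a = fun i : Fin m => if (i : ℕ) = 0 then aa else 0) ∨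
      (∃ l : ℕ, m = s * l ∧ (∀ i : Fin m, a i ≠ 0 → s ∣ (i : ℕ)) ∧ ¬ PAssoc (⇑σ) a)) :
    (∀ j : ℕ, j ≤ s - 1 →
      IsPetitAut (⇑σ) a (Hmap (⇑σ) (id : K → K) (algebraMap F K ω ^ j)))
    ∧ (∀ j r : ℕ,
        (Hmap (⇑σ) (id : K → K) (algebraMap F K ω ^ j) : (Fin m → K) → Fin m → K) ∘
          Hmap (⇑σ) (id : K → K) (algebraMap F K ω ^ r)
          = Hmap (⇑σ) (id : K → K) (algebraMap F K ω ^ (j + r)))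
    ∧ ((Hmap (⇑σ) (id : K → K) (algebraMap F K ω) : (Fin m → K) → Fin m → K)^[s] = id)
    ∧ (IsPrimitiveRoot ω s → ∀ j : ℕ, 0 < j → j < s →
        (Hmap (⇑σ) (id : K → K) (algebraMap F K ω) : (Fin m → K) → Fin m → K)^[j] ≠ id) := by
  set c := algebraMap F K ω
  have hc : σ c = c := σ.commutes ω
  have hcj (j : ℕ) : σ (c ^ j) = c ^ j := by rw [map_pow, hc]
  have hcs : c ^ s = 1 := by rw [← map_pow, hω, map_one]
  obtain ⟨hsm, hdvd, hsupp⟩ : s ≤ m ∧ s ∣ m ∧ ∀ i : Fin m, a i ≠ 0 → s ∣ (i : ℕ) := by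
    rcases hcase with ⟨rfl, aa, -, rfl⟩ | ⟨l, rfl, hsupp, hna⟩
    · refine ⟨le_rfl, dvd_rfl, fun i hi => ?_⟩
      rw [show (i : ℕ) = 0 from of_not_not fun h0 => hi (if_neg h0)]
      exact dvd_zero _
    · have hl : l ≠ 0 := by
        rintro rfl
        exact hna fun _ _ _ => funext fun i => (Nat.not_lt_zero _ i.isLt).elim
      exact ⟨Nat.le_mul_of_pos_right s (Nat.pos_of_ne_zero hl), dvd_mul_right s l, hsupp⟩
  refine ⟨fun j _ => isPetitAut_Hmap_id (hcj j) hs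
      (by rw [← pow_mul, mul_comm, pow_mul, hcs, one_pow]) hdvd hsupp,
    fun j r => by rw [Hmap_id_comp σ (hcj j) (hcj r), pow_add],
    by rw [Hmap_id_iterate σ hc, hcs, Hmap_id_one], fun hprim j hj0 hjs hj => ?_⟩
  rw [Hmap_id_iterate σ hc] at hj
  exact (hprim.map_of_injective (algebraMap F K).injective).pow_ne_one_of_pos_of_lt hj0.ne' hjs
    (eq_one_of_Hmap_id_eq_id σ (by omega) hj)

/-- **Theorem 5.1.** Let `K/F` be finite Galois, `σ ∈ Gal(K/F)` with `Fix(σ) = F`,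
and suppose `F` contains an `s`-th root of unity `ω`.  Suppose either
`f(t) = t^s − a` with `a ∈ K∖F`, or `f(t) = t^{sl} − Σ_{i<l} a_{is} t^{is}` with `S_f`
not associative.  Then the maps `H_{id,ω^j}` are automorphisms of `S_f` and
`⟨H_{id,ω}⟩` is a cyclic subgroup of `Aut_F(S_f)` of order at most `s`, of order
exactly `s` when `ω` is a primitive `s`-th root of unity. -/
theorem stmt14 {F K : Type*} [Field F] [Field K] [Algebra F K]
    [FiniteDimensional F K] [IsGalois F K]
    (σ : K ≃ₐ[F] K) (hσ : σ ≠ AlgEquiv.refl)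
    (hfix : ∀ x : K, σ x = x ↔ x ∈ Set.range (algebraMap F K))
    (s : ℕ) (hs : 0 < s) (ω : F) (hω : ω ^ s = 1)
    (m : ℕ) (a : Fin m → K)
    (hcase :
      (m = s ∧ ∃ aa : K, aa ∉ Set.range (algebraMap F K) ∧
        a = fun i : Fin m => if (i : ℕ) = 0 then aa else 0) ∨
      (∃ l : ℕ, m = s * l ∧ (∀ i : Fin m, a i ≠ 0 → s ∣ (i : ℕ)) ∧ ¬ PAssoc (⇑σ) a)) :
    (∀ j : ℕ, j ≤ s - 1 →
      IsPetitAut (⇑σ) a (Hmap (⇑σ) (id : K → K) (algebraMap F K ω ^ j)))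
    ∧ (∀ j r : ℕ,
        (Hmap (⇑σ) (id : K → K) (algebraMap F K ω ^ j) : (Fin m → K) → Fin m → K) ∘
          Hmap (⇑σ) (id : K → K) (algebraMap F K ω ^ r)
          = Hmap (⇑σ) (id : K → K) (algebraMap F K ω ^ (j + r)))
    ∧ ((Hmap (⇑σ) (id : K → K) (algebraMap F K ω) : (Fin m → K) → Fin m → K)^[s] = id)
    ∧ (IsPrimitiveRoot ω s → ∀ j : ℕ, 0 < j → j < s →
        (Hmap (⇑σ) (id : K → K) (algebraMap F K ω) : (Fin m → K) → Fin m → K)^[j] ≠ id) :=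
  stmt14_general σ s hs ω hω m a hcase
end

section
/- Let A = (K/F, σ, a) be a nonassociative cyclic algebra of degree m with a ∈ K∖F. Then the F-algebra automorphisms of A that restrict to the identity on K are exactly the maps H_{id,l} for l ∈ K^× with N_{K/F}(l) = 1; each of these is an inner automorphism of A, and together they form a subgroup of Aut_F(A) isomorphic to ker(N_{K/F} : K^× → F^×). -/
namespace St16

variable {F K : Type*} [Field F] [Field K] [Algebra F K]

lemma coe_pow (σ : K ≃ₐ[F] K) (n : ℕ) : (⇑σ)^[n] = ⇑(σ ^ n) := by
  induction n with
  | zero => ext x; simp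
  | succ n ih =>
    rw [Function.iterate_succ, pow_succ]
    ext x
    simp [-AlgEquiv.coe_pow, ih]

lemma iter_mul (σ : K ≃ₐ[F] K) (n : ℕ) (x y : K) :
    (⇑σ)^[n] (x * y) = (⇑σ)^[n] x * (⇑σ)^[n] y := by
  rw [coe_pow]; exact map_mul _ _ _

lemma iter_one (σ : K ≃ₐ[F] K) (n : ℕ) : (⇑σ)^[n] (1 : K) = 1 := by
  rw [coe_pow]; exact map_one _

lemma iter_zero (σ : K ≃ₐ[F] K) (n : ℕ) : (⇑σ)^[n] (0 : K) = 0 := by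
  rw [coe_pow]; exact map_zero _

lemma iter_ne_zero (σ : K ≃ₐ[F] K) (n : ℕ) {x : K} (hx : x ≠ 0) : (⇑σ)^[n] x ≠ 0 := by
  rw [coe_pow]
  simpa [-AlgEquiv.coe_pow] using hx

/-- `cprod σ l n = ∏_{q<n} σ^q(l)`. -/
noncomputable def cprod (σ : K → K) (l : K) (n : ℕ) : K :=
  ∏ q ∈ Finset.range n, σ^[q] l

lemma cprod_zero (σ : K → K) (l : K) : cprod σ l 0 = 1 := by simp [cprod]

lemma cprod_one (σ : K → K) (l : K) : cprod σ l 1 = l := by simp [cprod]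

lemma cprod_succ (σ : K → K) (l : K) (n : ℕ) :
    cprod σ l (n + 1) = cprod σ l n * (σ)^[n] l := by
  simp [cprod, Finset.prod_range_succ]

lemma cprod_add (σ : K ≃ₐ[F] K) (l : K) (p q : ℕ) :
    cprod ⇑σ l (p + q) = cprod ⇑σ l p * (⇑σ)^[p] (cprod ⇑σ l q) := by
  rw [cprod, cprod, cprod, Finset.prod_range_add, coe_pow, map_prod]
  congr 1
  refine Finset.prod_congr rfl fun i _ => ?_
  simp [-AlgEquiv.coe_pow, coe_pow, pow_add, AlgEquiv.mul_apply]

lemma cprod_ne_zero (σ : K ≃ₐ[F] K) {l : K} (hl : l ≠ 0) (n : ℕ) : cprod ⇑σ l n ≠ 0 :=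
  Finset.prod_ne_zero_iff.2 fun q _ => iter_ne_zero σ q hl

/-- The basis vector `t^s` of `S_f`. -/
noncomputable def ebv (K : Type*) [Field K] (m s : ℕ) : Fin m → K :=
  fun i => if (i : ℕ) = s then 1 else 0

lemma tred_lt (σ : K → K) {m : ℕ} (a : Fin m → K) {s : ℕ} (hs : s < m) :
    tred σ m a s = ebv K m s := by
  rw [tred, dif_pos hs]; rfl

lemma tred_ge (σ : K ≃ₐ[F] K) {m : ℕ} (aa : K) {s : ℕ} (h1 : m ≤ s) (h2 : s < 2 * m)
    (hm : 0 < m) :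
    tred ⇑σ m (fun i : Fin m => if (i : ℕ) = 0 then aa else 0) s
      = (⇑σ)^[s - m] aa • ebv K m (s - m) := by
  rw [tred, dif_neg (by omega)]
  rw [Finset.sum_eq_single_of_mem (⟨0, hm⟩ : Fin m) (Finset.mem_univ _)]
  · simp only [Fin.val_mk, Nat.add_zero]
    rw [tred_lt _ _ (by omega : s - m < m), if_true]
  · intro i _ hi
    have : (i : ℕ) ≠ 0 := fun h => hi (Fin.ext h)
    simp only [this, if_neg, if_false]
    rw [iter_zero, zero_smul]

lemma pmul_def {m : ℕ} (σ : K → K) (a : Fin m → K) (x y : Fin m → K) (k : Fin m) :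
    pmul σ a x y k = ∑ i : Fin m, ∑ j : Fin m,
      (x i * σ^[(i : ℕ)] (y j)) * tred σ m a ((i : ℕ) + (j : ℕ)) k := by
  simp [pmul, Finset.sum_apply]

lemma pone_eq (m : ℕ) : pone K m = ebv K m 0 := rfl

lemma iota_eq (m : ℕ) (c : K) : iota K m c = c • ebv K m 0 := by
  funext i
  simp only [iota, ebv, Pi.smul_apply, smul_eq_mul, mul_ite, mul_one, mul_zero]

lemma Hmap_apply (σ : K → K) {m : ℕ} (l : K) (x : Fin m → K) (k : Fin m) :
    Hmap σ (id : K → K) l x k = x k * cprod σ l (k : ℕ) := rfl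

lemma pmul_smul_basis (σ : K ≃ₐ[F] K) {m : ℕ} (a : Fin m → K) (α β : K) {p q : ℕ}
    (hp : p < m) (hq : q < m) :
    pmul ⇑σ a (α • ebv K m p) (β • ebv K m q)
      = (α * (⇑σ)^[p] β) • tred ⇑σ m a (p + q) := by
  funext k
  rw [pmul_def, Finset.sum_eq_single_of_mem (⟨p, hp⟩ : Fin m) (Finset.mem_univ _),
    Finset.sum_eq_single_of_mem (⟨q, hq⟩ : Fin m) (Finset.mem_univ _)]
  · simp [ebv]
  · intro j _ hj
    have hj' : (j : ℕ) ≠ q := fun h => hj (Fin.ext h)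
    simp [ebv, hj', iter_zero]
  · intro i _ hi
    have hi' : (i : ℕ) ≠ p := fun h => hi (Fin.ext h)
    simp [ebv, hi']

lemma pmul_iota_left (σ : K ≃ₐ[F] K) {m : ℕ} (a : Fin m → K) (hm : 0 < m) (c : K)
    (x : Fin m → K) :
    pmul ⇑σ a (iota K m c) x = c • x := by
  funext k
  rw [pmul_def, Finset.sum_eq_single_of_mem (⟨0, hm⟩ : Fin m) (Finset.mem_univ _)]
  · simp only [Fin.val_mk, Function.iterate_zero, id_eq, Nat.zero_add, iota, if_pos rfl]
    rw [Finset.sum_eq_single_of_mem k (Finset.mem_univ _)]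
    · rw [tred_lt _ _ k.isLt]
      simp [ebv]
    · intro j _ hj
      have hj' : (k : ℕ) ≠ (j : ℕ) := fun h => hj (Fin.ext h).symm
      rw [tred_lt _ _ j.isLt]
      simp [ebv, hj']
  · intro i _ hi
    have hi' : (i : ℕ) ≠ 0 := fun h => hi (Fin.ext h)
    simp [iota, hi']

lemma pmul_iota_right (σ : K ≃ₐ[F] K) {m : ℕ} (a : Fin m → K) (hm : 0 < m) (c : K)
    (x : Fin m → K) (k : Fin m) :
    pmul ⇑σ a x (iota K m c) k = x k * (⇑σ)^[(k : ℕ)] c := by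
  have h1 : ∀ i : Fin m,
      (∑ j : Fin m, (x i * (⇑σ)^[(i : ℕ)] (iota K m c j)) * tred ⇑σ m a ((i : ℕ) + (j : ℕ)) k)
      = (x i * (⇑σ)^[(i : ℕ)] c) * tred ⇑σ m a (i : ℕ) k := by
    intro i
    rw [Finset.sum_eq_single_of_mem (⟨0, hm⟩ : Fin m) (Finset.mem_univ _)]
    · simp [iota]
    · intro j _ hj
      have hj' : (j : ℕ) ≠ 0 := fun h => hj (Fin.ext h)
      simp [iota, hj', iter_zero]
  rw [pmul_def, Finset.sum_congr rfl fun i _ => h1 i,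
    Finset.sum_eq_single_of_mem k (Finset.mem_univ _)]
  · rw [tred_lt _ _ k.isLt]
    simp [ebv]
  · intro i _ hi
    have hi' : (k : ℕ) ≠ (i : ℕ) := fun h => hi (Fin.ext h).symm
    rw [tred_lt _ _ i.isLt]
    simp [ebv, hi']

lemma decomp {m : ℕ} (x : Fin m → K) : ∑ j : Fin m, x j • ebv K m (j : ℕ) = x := by
  funext k
  rw [Finset.sum_apply, Finset.sum_eq_single_of_mem k (Finset.mem_univ _)]
  · simp [ebv]
  · intro j _ hj
    have hj' : (k : ℕ) ≠ (j : ℕ) := fun h => hj (Fin.ext h).symm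
    simp [ebv, hj']


lemma tred_mul_cprod (σ : K ≃ₐ[F] K) {m : ℕ} (aa l : K) (hN : cprod ⇑σ l m = 1)
    (hm : 0 < m) (i j k : Fin m) :
    tred ⇑σ m (fun i : Fin m => if (i : ℕ) = 0 then aa else 0) ((i : ℕ) + (j : ℕ)) k
        * cprod ⇑σ l (k : ℕ)
      = tred ⇑σ m (fun i : Fin m => if (i : ℕ) = 0 then aa else 0) ((i : ℕ) + (j : ℕ)) k
        * (cprod ⇑σ l (i : ℕ) * (⇑σ)^[(i : ℕ)] (cprod ⇑σ l (j : ℕ))) := by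
  rw [← cprod_add]
  by_cases hs : (i : ℕ) + (j : ℕ) < m
  · rw [tred_lt _ _ hs]
    by_cases hk : (k : ℕ) = (i : ℕ) + (j : ℕ)
    · simp [ebv, hk]
    · simp [ebv, hk]
  · have h2 : (i : ℕ) + (j : ℕ) < 2 * m := by have := i.isLt; have := j.isLt; omega
    rw [tred_ge σ aa (by omega) h2 hm]
    by_cases hk : (k : ℕ) = (i : ℕ) + (j : ℕ) - m
    · simp only [ebv, Pi.smul_apply, smul_eq_mul, hk, if_pos rfl, mul_one]
      congr 1
      rw [← hk]
      conv_rhs => rw [show (i : ℕ) + (j : ℕ) = (k : ℕ) + m by omega]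
      rw [cprod_add, hN, iter_one, mul_one]
    · simp [ebv, hk]

lemma Hmap_pmul (σ : K ≃ₐ[F] K) {m : ℕ} (aa l : K) (hN : cprod ⇑σ l m = 1) (hm : 0 < m)
    (x y : Fin m → K) :
    Hmap ⇑σ (id : K → K) l
        (pmul ⇑σ (fun i : Fin m => if (i : ℕ) = 0 then aa else 0) x y)
      = pmul ⇑σ (fun i : Fin m => if (i : ℕ) = 0 then aa else 0)
        (Hmap ⇑σ (id : K → K) l x) (Hmap ⇑σ (id : K → K) l y) := by
  funext k
  rw [Hmap_apply, pmul_def, pmul_def, Finset.sum_mul]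
  refine Finset.sum_congr rfl fun i _ => ?_
  rw [Finset.sum_mul]
  refine Finset.sum_congr rfl fun j _ => ?_
  rw [Hmap_apply, Hmap_apply, iter_mul σ]
  have key := tred_mul_cprod σ aa l hN hm i j k
  linear_combination (x i * (⇑σ)^[(i : ℕ)] (y j)) * key

lemma pow_fin_bijective [FiniteDimensional F K] [IsGalois F K] {m : ℕ} (hm : 2 ≤ m)
    (hdeg : Module.finrank F K = m) (σ : K ≃ₐ[F] K)
    (hgen : ∀ τ : K ≃ₐ[F] K, ∃ j : ℕ, τ = σ ^ j) :
    Function.Bijective (fun q : Fin m => σ ^ (q : ℕ)) := by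
  have hcard : Fintype.card (K ≃ₐ[F] K) = m := by
    rw [← Nat.card_eq_fintype_card, IsGalois.card_aut_eq_finrank, hdeg]
  have hσm : σ ^ m = 1 := by rw [← hcard]; exact pow_card_eq_one
  have hsurj : Function.Surjective (fun q : Fin m => σ ^ (q : ℕ)) := by
    intro τ
    obtain ⟨j, rfl⟩ := hgen τ
    have hj : σ ^ j = σ ^ (j % m) := by
      conv_lhs => rw [← Nat.div_add_mod j m]
      rw [pow_add, pow_mul, hσm, one_pow, one_mul]
    exact ⟨⟨j % m, Nat.mod_lt _ (by omega)⟩, hj.symm⟩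
  rw [Fintype.bijective_iff_surjective_and_card]
  exact ⟨hsurj, by simp [hcard]⟩

lemma order_eq [FiniteDimensional F K] [IsGalois F K] {m : ℕ} (hm : 2 ≤ m)
    (hdeg : Module.finrank F K = m) (σ : K ≃ₐ[F] K)
    (hgen : ∀ τ : K ≃ₐ[F] K, ∃ j : ℕ, τ = σ ^ j) :
    orderOf σ = m := by
  have hcard : Fintype.card (K ≃ₐ[F] K) = m := by
    rw [← Nat.card_eq_fintype_card, IsGalois.card_aut_eq_finrank, hdeg]
  have h1 : orderOf σ ≤ m := by
    rw [← hcard]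
    exact Nat.le_of_dvd (by rw [hcard]; omega) orderOf_dvd_card
  have hpos : 0 < orderOf σ := orderOf_pos σ
  by_contra h
  have hlt : orderOf σ < m := lt_of_le_of_ne h1 h
  have := (pow_fin_bijective hm hdeg σ hgen).injective
    (a₁ := ⟨orderOf σ, hlt⟩) (a₂ := ⟨0, by omega⟩) (by simp [pow_orderOf_eq_one])
  simp only [Fin.mk.injEq] at this
  omega

lemma norm_eq_cprod [FiniteDimensional F K] [IsGalois F K] {m : ℕ} (hm : 2 ≤ m)
    (hdeg : Module.finrank F K = m) (σ : K ≃ₐ[F] K)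
    (hgen : ∀ τ : K ≃ₐ[F] K, ∃ j : ℕ, τ = σ ^ j) (l : K) :
    algebraMap F K (Algebra.norm F l) = cprod ⇑σ l m := by
  rw [Algebra.norm_eq_prod_automorphisms,
    ← Fintype.prod_bijective _ (pow_fin_bijective hm hdeg σ hgen)
      (fun q : Fin m => (σ ^ (q : ℕ)) l) (fun τ => τ l) (fun q => rfl),
    Fin.prod_univ_eq_prod_range (fun q => (σ ^ q) l) m, cprod]
  exact Finset.prod_congr rfl fun q _ => by rw [coe_pow]


lemma cprod_mod (σ : K ≃ₐ[F] K) {m : ℕ} (hm : 0 < m) {l : K} (hN : cprod ⇑σ l m = 1)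
    (s : ℕ) : cprod ⇑σ l s = cprod ⇑σ l (s % m) := by
  induction s using Nat.strong_induction_on with
  | _ s ih =>
    by_cases hs : s < m
    · rw [Nat.mod_eq_of_lt hs]
    · have h1 : s = (s - m) + m := by omega
      rw [h1, cprod_add, hN, iter_one, mul_one, ih (s - m) (by omega), Nat.add_mod_right]

lemma cprod_telescope (σ : K ≃ₐ[F] K) {l b : K} (hb : b ≠ 0) (hlb : σ b = l * b) (k : ℕ) :
    cprod ⇑σ l k = (⇑σ)^[k] b * b⁻¹ := by
  induction k with
  | zero => simp [cprod_zero, mul_inv_cancel₀ hb]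
  | succ k ih =>
    rw [cprod_succ, ih, Function.iterate_succ_apply, hlb, iter_mul]
    ring

lemma hilbert90' [FiniteDimensional F K] [IsGalois F K] {m : ℕ} (hm : 2 ≤ m)
    (hdeg : Module.finrank F K = m) (σ : K ≃ₐ[F] K)
    (hgen : ∀ τ : K ≃ₐ[F] K, ∃ j : ℕ, τ = σ ^ j) {l : K} (hl : l ≠ 0)
    (hN : cprod ⇑σ l m = 1) :
    ∃ b : K, b ≠ 0 ∧ σ b = l * b := by
  have hm0 : 0 < m := by omega
  have horder := order_eq hm hdeg σ hgen
  set e := Equiv.ofBijective _ (pow_fin_bijective hm hdeg σ hgen) with he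
  have hsymm : ∀ τ : K ≃ₐ[F] K, σ ^ ((e.symm τ : Fin m) : ℕ) = τ := fun τ =>
    e.apply_symm_apply τ
  set f : (K ≃ₐ[F] K) → Kˣ :=
    fun τ => Units.mk0 (cprod ⇑σ l ((e.symm τ : Fin m) : ℕ)) (cprod_ne_zero σ hl _) with hf
  have hidx : ∀ τ g : K ≃ₐ[F] K, ∀ n : ℕ, σ ^ n = τ →
      cprod ⇑σ l ((e.symm τ : Fin m) : ℕ) = cprod ⇑σ l n := by
    intro τ g n hn
    have h1 : σ ^ ((e.symm τ : Fin m) : ℕ) = σ ^ n := by rw [hsymm, hn]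
    have h2 : ((e.symm τ : Fin m) : ℕ) ≡ n [MOD m] := by
      have h3 := pow_eq_pow_iff_modEq.1 h1
      rwa [horder] at h3
    rw [cprod_mod σ hm0 hN, cprod_mod σ hm0 hN n, h2]
  have hcoc : groupCohomology.IsMulCocycle₁ f := by
    intro g h
    ext
    have hg := hsymm g
    have hh := hsymm h
    have hgh : σ ^ (((e.symm g : Fin m) : ℕ) + ((e.symm h : Fin m) : ℕ)) = g * h := by
      rw [pow_add, hg, hh]
    rw [hf]
    simp only [AlgEquiv.smul_units_def, Units.val_mul, Units.coe_map, Units.val_mk0,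
      MonoidHom.coe_coe]
    rw [hidx (g * h) g _ hgh, cprod_add, coe_pow, hg]
    rw [mul_comm]
  obtain ⟨β, hβ⟩ := groupCohomology.isMulCoboundary₁_of_isMulCocycle₁_of_aut_to_units f hcoc
  have hβσ := congrArg Units.val (hβ σ)
  have hfσ : cprod ⇑σ l ((e.symm σ : Fin m) : ℕ) = l := by
    rw [hidx σ σ 1 (pow_one σ), cprod_one]
  simp only [AlgEquiv.smul_units_def, Units.val_div_eq_div_val, Units.coe_map,
    MonoidHom.coe_coe, Units.val_mk0, hf] at hβσ
  rw [hfσ] at hβσ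
  refine ⟨(β : K), Units.ne_zero β, ?_⟩
  rw [← hβσ, div_mul_cancel₀]
  exact Units.ne_zero β


lemma hmap_isAut (σ : K ≃ₐ[F] K) {m : ℕ} (hm : 2 ≤ m) (aa : K) {l : K} (hl : l ≠ 0)
    (hN : cprod ⇑σ l m = 1) :
    IsPetitAut ⇑σ (fun i : Fin m => if (i : ℕ) = 0 then aa else 0)
      (Hmap ⇑σ (id : K → K) l) := by
  constructor
  · rw [Function.bijective_iff_has_inverse]
    refine ⟨fun x k => x k * (cprod ⇑σ l (k : ℕ))⁻¹, fun x => ?_, fun x => ?_⟩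
    · funext k
      show Hmap ⇑σ (id : K → K) l x k * (cprod ⇑σ l (k : ℕ))⁻¹ = x k
      rw [Hmap_apply, mul_assoc, mul_inv_cancel₀ (cprod_ne_zero σ hl _), mul_one]
    · funext k
      rw [Hmap_apply]
      show x k * (cprod ⇑σ l (k : ℕ))⁻¹ * cprod ⇑σ l (k : ℕ) = x k
      rw [mul_assoc, inv_mul_cancel₀ (cprod_ne_zero σ hl _), mul_one]
  · intro x y
    funext k
    rw [Hmap_apply, Pi.add_apply, Pi.add_apply, Hmap_apply, Hmap_apply, add_mul]
  · intro c _ x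
    funext k
    rw [Hmap_apply, Pi.smul_apply, Pi.smul_apply, Hmap_apply, smul_eq_mul, smul_eq_mul,
      mul_assoc]
  · exact Hmap_pmul σ aa l hN (by omega)
  · funext k
    rw [Hmap_apply]
    by_cases hk : (k : ℕ) = 0
    · rw [hk, cprod_zero, mul_one]
    · simp [pone, hk]

lemma hmap_inner (σ : K ≃ₐ[F] K) {m : ℕ} (hm : 2 ≤ m) (aa : K) {l b : K} (hb : b ≠ 0)
    (hlb : σ b = l * b) :
    IsInnerPetit ⇑σ (fun i : Fin m => if (i : ℕ) = 0 then aa else 0)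
      (Hmap ⇑σ (id : K → K) l) := by
  refine ⟨iota K m b, iota K m b⁻¹, ?_, ?_⟩
  · rw [pmul_iota_left σ _ (by omega), iota_eq, pone_eq, smul_smul,
      inv_mul_cancel₀ hb, one_smul]
  · intro x
    rw [pmul_iota_left σ _ (by omega)]
    funext k
    rw [pmul_iota_right σ _ (by omega), Hmap_apply, cprod_telescope σ hb hlb,
      Pi.smul_apply, smul_eq_mul]
    ring


lemma aut_fix_eq_hmap [FiniteDimensional F K] [IsGalois F K] {m : ℕ} (hm : 2 ≤ m)
    (hdeg : Module.finrank F K = m) (σ : K ≃ₐ[F] K)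
    (hgen : ∀ τ : K ≃ₐ[F] K, ∃ j : ℕ, τ = σ ^ j) (aa : K) (ha : aa ≠ 0)
    (H : (Fin m → K) → (Fin m → K))
    (hA : IsPetitAut ⇑σ (fun i : Fin m => if (i : ℕ) = 0 then aa else 0) H)
    (hfix : ∀ c : K, H (iota K m c) = iota K m c) :
    ∃ l : K, l ≠ 0 ∧ Algebra.norm F l = 1 ∧ H = Hmap ⇑σ (id : K → K) l := by
  have hm0 : 0 < m := by omega
  have horder := order_eq hm hdeg σ hgen
  set A : Fin m → K := fun i : Fin m => if (i : ℕ) = 0 then aa else 0 with hAdef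
  set φ : (Fin m → K) →+ (Fin m → K) := AddMonoidHom.mk' H hA.map_add with hφ
  have hsmul : ∀ (c : K) (x : Fin m → K), H (c • x) = c • H x := by
    intro c x
    rw [← pmul_iota_left σ A hm0 c x, hA.map_mul, hfix, pmul_iota_left σ A hm0]
  set u : Fin m → K := H (ebv K m 1) with hu_def
  set l : K := u ⟨1, by omega⟩ with hl_def
  have hu : ∀ (c : K) (k : Fin m), u k * (⇑σ)^[(k : ℕ)] c = σ c * u k := by
    intro c k
    have h1 : pmul ⇑σ A (ebv K m 1) (iota K m c) = pmul ⇑σ A (iota K m (σ c)) (ebv K m 1) := by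
      rw [pmul_iota_left σ A hm0]
      funext k'
      rw [pmul_iota_right σ A hm0]
      by_cases hk : (k' : ℕ) = 1
      · simp [ebv, hk]
      · simp [ebv, hk]
    have h2 := congrArg H h1
    rw [hA.map_mul, hA.map_mul, hfix, hfix, pmul_iota_left σ A hm0] at h2
    rw [← hu_def] at h2
    rw [← pmul_iota_right σ A hm0 c u k, h2, Pi.smul_apply, smul_eq_mul]
  have hu0 : ∀ k : Fin m, (k : ℕ) ≠ 1 → u k = 0 := by
    intro k hk
    have hne : σ ^ (k : ℕ) ≠ σ ^ 1 := by
      intro h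
      exact hk (pow_injOn_Iio_orderOf (by rw [Set.mem_Iio, horder]; exact k.isLt)
        (by rw [Set.mem_Iio, horder]; omega) h)
    obtain ⟨c, hc⟩ : ∃ c : K, (σ ^ (k : ℕ)) c ≠ (σ ^ 1) c := by
      by_contra hcc
      push_neg at hcc
      exact hne (AlgEquiv.ext hcc)
    by_contra hu0
    apply hc
    have h3 := hu c k
    rw [coe_pow] at h3
    rw [pow_one]
    have h4 : u k * (σ ^ (k : ℕ)) c = u k * σ c := by rw [h3, mul_comm]
    exact mul_left_cancel₀ hu0 h4
  have hu_eq : H (ebv K m 1) = l • ebv K m 1 := by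
    rw [← hu_def]
    funext k
    by_cases hk : (k : ℕ) = 1
    · have hk' : k = ⟨1, by omega⟩ := Fin.ext hk
      rw [hk']
      simp [ebv, hl_def]
    · rw [hu0 k hk]
      simp [ebv, hk]
  have hl0 : l ≠ 0 := by
    intro h
    have h1 : H (ebv K m 1) = H 0 := by
      rw [hu_eq, h, zero_smul]
      exact (map_zero φ).symm
    have h2 := hA.bijective.injective h1
    have h3 := congrFun h2 ⟨1, by omega⟩
    simp [ebv] at h3
  have hebv : ∀ i : ℕ, i < m → H (ebv K m i) = cprod ⇑σ l i • ebv K m i := by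
    intro i
    induction i with
    | zero => intro _; rw [← pone_eq, hA.map_one, cprod_zero, one_smul, pone_eq]
    | succ i ih =>
      intro hi1
      have hi : i < m := by omega
      have e1 : pmul ⇑σ A (ebv K m i) (ebv K m 1) = ebv K m (i + 1) := by
        have hb := pmul_smul_basis σ A (1 : K) (1 : K) hi (show 1 < m by omega)
        rw [one_smul, one_smul, iter_one, mul_one, one_smul] at hb
        rw [hb, tred_lt _ _ hi1]
      have e2 : H (ebv K m (i + 1))
          = pmul ⇑σ A (cprod ⇑σ l i • ebv K m i) (l • ebv K m 1) := by
        rw [← e1, hA.map_mul, ih hi, hu_eq]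
      rw [e2, pmul_smul_basis σ A _ _ hi (show 1 < m by omega), tred_lt _ _ hi1,
        ← cprod_succ]
  have hNc : cprod ⇑σ l m = 1 := by
    have e3 : pmul ⇑σ A (ebv K m (m - 1)) (ebv K m 1) = iota K m aa := by
      have hb := pmul_smul_basis σ A (1 : K) (1 : K) (show m - 1 < m by omega)
        (show 1 < m by omega)
      rw [one_smul, one_smul, iter_one, mul_one, one_smul] at hb
      rw [hb, show (m - 1) + 1 = m by omega,
        tred_ge σ aa le_rfl (by omega) hm0, Nat.sub_self, Function.iterate_zero, id_eq,
        iota_eq]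
    have e4 := congrArg H e3
    rw [hA.map_mul, hebv (m - 1) (by omega), hu_eq, hfix aa,
      pmul_smul_basis σ A _ _ (show m - 1 < m by omega) (show 1 < m by omega),
      ← cprod_succ, show (m - 1) + 1 = m by omega,
      tred_ge σ aa le_rfl (by omega) hm0, Nat.sub_self, Function.iterate_zero, id_eq,
      iota_eq, smul_smul] at e4
    have e5 := congrFun e4 ⟨0, hm0⟩
    simp [ebv] at e5
    exact mul_right_cancel₀ ha (by rw [one_mul]; exact e5)
  have hnorm : Algebra.norm F l = 1 := by
    have h1 := norm_eq_cprod hm hdeg σ hgen l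
    rw [hNc] at h1
    exact (algebraMap F K).injective (by rw [h1, map_one])
  refine ⟨l, hl0, hnorm, ?_⟩
  funext x
  have hsum : H (∑ j : Fin m, x j • ebv K m (j : ℕ))
      = ∑ j : Fin m, H (x j • ebv K m (j : ℕ)) := map_sum φ _ _
  rw [show H x = H (∑ j : Fin m, x j • ebv K m (j : ℕ)) from by rw [decomp], hsum]
  funext k
  rw [Finset.sum_apply, Hmap_apply,
    Finset.sum_congr rfl (fun j _ => by rw [hsmul, hebv (j : ℕ) j.isLt]),
    Finset.sum_eq_single_of_mem k (Finset.mem_univ _)]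
  · simp [ebv, smul_smul]
  · intro j _ hj
    have hj' : (k : ℕ) ≠ (j : ℕ) := fun h => hj (Fin.ext h).symm
    simp [ebv, hj']


end St16


/-- **Theorem 6.1 (i).** Let `A = (K/F, σ, a) = S_f`, `f(t) = t^m − a`, be a
nonassociative cyclic algebra of degree `m` (`K/F` cyclic Galois of degree `m`,
`Gal(K/F) = ⟨σ⟩`, `a ∈ K∖F`).  The automorphisms of `A` extending `id_K` are exactly
the maps `H_{id,l}` with `N_{K/F}(l) = 1`; each of these is inner, and they form a
subgroup of `Aut_F(A)` isomorphic to `ker(N_{K/F})`. -/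
theorem stmt16 {F K : Type*} [Field F] [Field K] [Algebra F K]
    [FiniteDimensional F K] [IsGalois F K]
    (m : ℕ) (hm : 2 ≤ m) (hdeg : Module.finrank F K = m)
    (σ : K ≃ₐ[F] K) (hgen : ∀ τ : K ≃ₐ[F] K, ∃ j : ℕ, τ = σ ^ j)
    (aa : K) (ha : aa ∉ Set.range (algebraMap F K)) :
    (∀ l : K, l ≠ 0 → Algebra.norm F l = 1 →
      IsPetitAut (⇑σ) (fun i : Fin m => if (i : ℕ) = 0 then aa else 0)
        (Hmap (⇑σ) (id : K → K) l) ∧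
      IsInnerPetit (⇑σ) (fun i : Fin m => if (i : ℕ) = 0 then aa else 0)
        (Hmap (⇑σ) (id : K → K) l))
    ∧ (∀ H : (Fin m → K) → (Fin m → K),
        IsPetitAut (⇑σ) (fun i : Fin m => if (i : ℕ) = 0 then aa else 0) H →
        ((∀ c : K, H (iota K m c) = iota K m c) ↔
          ∃ l : K, l ≠ 0 ∧ Algebra.norm F l = 1 ∧ H = Hmap (⇑σ) (id : K → K) l))
    ∧ (∀ l l' : K, l ≠ 0 → l' ≠ 0 → Algebra.norm F l = 1 → Algebra.norm F l' = 1 →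
        ((Hmap (⇑σ) (id : K → K) l : (Fin m → K) → Fin m → K) ∘
            Hmap (⇑σ) (id : K → K) l' = Hmap (⇑σ) (id : K → K) (l * l'))
        ∧ ((Hmap (⇑σ) (id : K → K) l : (Fin m → K) → Fin m → K)
            = Hmap (⇑σ) (id : K → K) l' → l = l')) := by
  have haa0 : aa ≠ 0 := fun h => ha ⟨0, by rw [map_zero, h]⟩
  refine ⟨?_, ?_, ?_⟩
  · intro l hl hnorm
    have hN : St16.cprod ⇑σ l m = 1 := by
      have h1 := St16.norm_eq_cprod hm hdeg σ hgen l
      rw [hnorm, map_one] at h1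
      exact h1.symm
    refine ⟨St16.hmap_isAut σ hm aa hl hN, ?_⟩
    obtain ⟨b, hb, hlb⟩ := St16.hilbert90' hm hdeg σ hgen hl hN
    exact St16.hmap_inner σ hm aa hb hlb
  · intro H hA
    constructor
    · exact St16.aut_fix_eq_hmap hm hdeg σ hgen aa haa0 H hA
    · rintro ⟨l, hl, hnorm, rfl⟩ c
      funext k
      rw [St16.Hmap_apply]
      by_cases hk : (k : ℕ) = 0
      · rw [hk, St16.cprod_zero, mul_one]
      · simp [iota, hk]
  · intro l l' hl hl' hn hn'
    constructor
    · funext x k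
      show Hmap (⇑σ) (id : K → K) l (Hmap (⇑σ) (id : K → K) l' x) k = _
      rw [St16.Hmap_apply, St16.Hmap_apply, St16.Hmap_apply, mul_assoc]
      congr 1
      rw [St16.cprod, St16.cprod, St16.cprod, ← Finset.prod_mul_distrib]
      refine Finset.prod_congr rfl fun q _ => ?_
      rw [St16.iter_mul σ]
      ring
    · intro heq
      have h1 := congrFun (congrFun heq (fun _ => (1 : K))) ⟨1, by omega⟩
      rw [St16.Hmap_apply, St16.Hmap_apply] at h1
      simpa [St16.cprod_one] using h1
end
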